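/- arXiv:2303.01678 — 2 statements merged into one kernel-verified Lean document; each statement's English description precedes it below -/
import Mathlib

section
/- For f ∈ L¹(ℝ²), the 1D Fourier transform in s of the Radon transform satisfies the Fourier slice theorem: F_s[Rf(θ, ·)](ξ) = F₂[f](ξ Θ_θ), where F₂ is the 2D Fourier transform. -/
/-!
The plane wave `x ↦ e^{-iξ x·Θ_θ}` equals `e^{-iξs}` on the whole line `sΘ_θ + ℝΘ_θ^⊥`, so
`F₂f(ξΘ_θ)` is the integral of the `L¹` function `f(x) e^{-iξ x·Θ_θ}`. In the coordinates
`x = sΘ_θ + tΘ_θ^⊥`, a linear change of variables of determinant `-1` and hence measure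
preserving, Fubini computes that integral as `∫ Rf(θ, s) e^{-iξs} ds`.
-/

open MeasureTheory

/-- Complex-valued 2D Radon transform. -/
noncomputable def radonC (f : ℝ × ℝ → ℂ) (θ s : ℝ) : ℂ :=
  ∫ t : ℝ, f (s * Real.cos θ + t * Real.sin θ, s * Real.sin θ - t * Real.cos θ)

/-- 1D Fourier transform `F₁g(ξ) = ∫ g(s) e^{-iξs} ds`. -/
noncomputable def fourier1 (g : ℝ → ℂ) (ξ : ℝ) : ℂ :=
  ∫ s : ℝ, g s * Complex.exp (-Complex.I * (ξ * s : ℝ))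

/-- 2D Fourier transform `F₂f(ω) = ∫ f(x) e^{-i x·ω} dx`. -/
noncomputable def fourier2 (f : ℝ × ℝ → ℂ) (ω : ℝ × ℝ) : ℂ :=
  ∫ x : ℝ × ℝ, f x * Complex.exp (-Complex.I * (x.1 * ω.1 + x.2 * ω.2 : ℝ))

/-- The coordinates `(s, t) ↦ s Θ_θ + t Θ_θ^⊥` of `radonC`, with `Θ_θ = (cos θ, sin θ)` and
`Θ_θ^⊥ = (sin θ, -cos θ)`. -/
noncomputable def radonFrame (θ : ℝ) : (ℝ × ℝ) →ₗ[ℝ] (ℝ × ℝ) where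
  toFun p := (p.1 * Real.cos θ + p.2 * Real.sin θ, p.1 * Real.sin θ - p.2 * Real.cos θ)
  map_add' p q := by ext <;> simp only [Prod.fst_add, Prod.snd_add] <;> ring
  map_smul' c p := by ext <;> simp only [Prod.smul_fst, Prod.smul_snd, smul_eq_mul,
    RingHom.id_apply] <;> ring

theorem radonFrame_apply (θ s t : ℝ) :
    radonFrame θ (s, t) =
      (s * Real.cos θ + t * Real.sin θ, s * Real.sin θ - t * Real.cos θ) := rfl

theorem radonFrame_involutive (θ : ℝ) : Function.Involutive (radonFrame θ) := by
  rintro ⟨s, t⟩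
  simp only [radonFrame_apply, Prod.mk.injEq]
  constructor
  · linear_combination s * Real.sin_sq_add_cos_sq θ
  · linear_combination t * Real.sin_sq_add_cos_sq θ

theorem det_radonFrame (θ : ℝ) : LinearMap.det (radonFrame θ) = -1 := by
  rw [← LinearMap.det_toMatrix (Module.Basis.finTwoProd ℝ), Matrix.det_fin_two]
  simp only [LinearMap.toMatrix_apply, Module.Basis.finTwoProd_zero, Module.Basis.finTwoProd_one,
    Module.Basis.coe_finTwoProd_repr, radonFrame_apply, Matrix.cons_val_zero, Matrix.cons_val_one,
    Matrix.cons_val_fin_one]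
  linear_combination -Real.sin_sq_add_cos_sq θ

theorem measurePreserving_radonFrame (θ : ℝ) :
    MeasurePreserving (radonFrame θ) (volume : Measure (ℝ × ℝ)) volume := by
  have hdet : LinearMap.det (radonFrame θ) ≠ 0 := by rw [det_radonFrame]; norm_num
  refine ⟨(radonFrame θ).continuous_of_finiteDimensional.measurable, ?_⟩
  rw [Measure.map_linearMap_addHaar_eq_smul_addHaar _ hdet, det_radonFrame]
  norm_num

theorem radonFrame_dot (θ ξ s t : ℝ) :
    (radonFrame θ (s, t)).1 * (ξ * Real.cos θ) + (radonFrame θ (s, t)).2 * (ξ * Real.sin θ)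
      = ξ * s := by
  rw [radonFrame_apply]
  linear_combination ξ * s * Real.sin_sq_add_cos_sq θ

theorem integral_integral_radonFrame {E : Type*} [NormedAddCommGroup E] [NormedSpace ℝ E]
    (θ : ℝ) {g : ℝ × ℝ → E} (hg : Integrable g) :
    ∫ s : ℝ, ∫ t : ℝ, g (radonFrame θ (s, t)) = ∫ x : ℝ × ℝ, g x := by
  let e : (ℝ × ℝ) ≃ᵐ (ℝ × ℝ) := MeasurableEquiv.ofInvolutive _ (radonFrame_involutive θ)
    (radonFrame θ).continuous_of_finiteDimensional.measurable
  have hmp : MeasurePreserving e volume volume := measurePreserving_radonFrame θ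
  have hcomp : Integrable (fun p => g (e p)) (volume.prod volume) :=
    hmp.integrable_comp_emb e.measurableEmbedding |>.mpr hg
  rw [← hmp.integral_comp' g, Measure.volume_eq_prod, integral_prod _ hcomp]
  rfl

theorem MeasureTheory.Integrable.mul_cexp_neg_I_mul_ofReal {α : Type*} [MeasurableSpace α]
    {μ : Measure α} {f : α → ℂ} (hf : Integrable f μ) {φ : α → ℝ} (hφ : Measurable φ) :
    Integrable (fun x => f x * Complex.exp (-Complex.I * φ x)) μ := by
  refine hf.mul_bdd (c := 1) (by fun_prop) (ae_of_all _ fun x => ?_)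
  rw [neg_mul, mul_comm, ← neg_mul, ← Complex.ofReal_neg, Complex.norm_exp_ofReal_mul_I]

/-- the Fourier slice theorem:
`F_s[Rf(θ,·)](ξ) = F₂[f](ξ Θ_θ)` for `f ∈ L¹(ℝ²)`. -/
theorem fourier_slice (f : ℝ × ℝ → ℂ) (hf : Integrable f) (θ ξ : ℝ) :
    fourier1 (fun s => radonC f θ s) ξ
      = fourier2 f (ξ * Real.cos θ, ξ * Real.sin θ) := by
  have hmod := hf.mul_cexp_neg_I_mul_ofReal
    (φ := fun x => x.1 * (ξ * Real.cos θ) + x.2 * (ξ * Real.sin θ)) (by fun_prop)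
  rw [fourier2, ← integral_integral_radonFrame θ hmod, fourier1]
  refine integral_congr_ae (ae_of_all _ fun s => ?_)
  simp only [radonC, ← integral_mul_const, radonFrame_dot]
  rfl
end

section
/- The coordinate-wise minimizer of the separable paraboloid surrogate is given in closed form by z_j^{l+1} = z_j^l − [Σ_i a_{ij} h_i ((Az^l)_i − P_i) + (λ/γ)(z_j^l − μ_j)] / [Σ_i a_{ij}² h_i / β_{ij} + λ/γ], and the resulting iteration monotonically decreases L(z) = ‖Az − P‖²_H + (λ/γ)‖z − μ‖²: L(z^{l+1}) ≤ L(z^l). -/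
open Finset

/-- The restricted least-squares objective
`L(z) = ‖Az - P‖²_H + (λ/γ)‖z - μ‖²` with `H = diag(h)`. -/
noncomputable def lsObj {M N : ℕ} (A : Fin M → Fin N → ℝ) (P : Fin M → ℝ)
    (μ : Fin N → ℝ) (h : Fin M → ℝ) (lam gam : ℝ) (z : Fin N → ℝ) : ℝ :=
  (∑ i, h i * ((∑ j, A i j * z j) - P i) ^ 2)
    + (lam / gam) * ∑ j, (z j - μ j) ^ 2

/-- The separable paraboloid surrogate `Q(z; zˡ)`. -/
noncomputable def surrogate {M N : ℕ} (A : Fin M → Fin N → ℝ) (P : Fin M → ℝ)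
    (μ : Fin N → ℝ) (h : Fin M → ℝ) (lam gam : ℝ)
    (β : Fin M → Fin N → ℝ) (zl z : Fin N → ℝ) : ℝ :=
  (∑ i, ∑ j, β i j * h i *
      ((A i j / β i j) * (z j - zl j) + (∑ k, A i k * zl k) - P i) ^ 2)
    + (lam / gam) * ∑ j, (z j - μ j) ^ 2

/-- The closed-form coordinate-wise update
`zⱼˡ⁺¹ = zⱼˡ - [Σᵢ aᵢⱼ hᵢ ((Azˡ)ᵢ - Pᵢ) + (λ/γ)(zⱼˡ - μⱼ)] / [Σᵢ aᵢⱼ² hᵢ/βᵢⱼ + λ/γ]`. -/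
noncomputable def sqsUpdate {M N : ℕ} (A : Fin M → Fin N → ℝ) (P : Fin M → ℝ)
    (μ : Fin N → ℝ) (h : Fin M → ℝ) (lam gam : ℝ)
    (β : Fin M → Fin N → ℝ) (zl : Fin N → ℝ) : Fin N → ℝ :=
  fun j => zl j -
    ((∑ i, A i j * h i * ((∑ k, A i k * zl k) - P i)) + (lam / gam) * (zl j - μ j))
      / ((∑ i, A i j ^ 2 * h i / β i j) + lam / gam)

private lemma sq_key (a b hi t s p : ℝ) (hz : b = 0 → a = 0) :
    b * hi * ((a / b) * t + s - p) ^ 2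
      = (a ^ 2 * hi / b) * t ^ 2 + 2 * (a * hi * (s - p)) * t + b * hi * (s - p) ^ 2 := by
  rcases eq_or_ne b 0 with hb0 | hb0
  · subst hb0; simp [hz rfl]
  · field_simp
    ring

private lemma lin_key (a b t s p : ℝ) (hz : b = 0 → a = 0) :
    b * ((a / b) * t + s - p) = a * t + b * (s - p) := by
  rcases eq_or_ne b 0 with hb0 | hb0
  · subst hb0; simp [hz rfl]
  · field_simp
    ring

private lemma quad_min (C B t : ℝ) (hc : 0 < C) :
    C * (-(B / C)) ^ 2 + 2 * B * (-(B / C)) ≤ C * t ^ 2 + 2 * B * t := by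
  have h1 : C * (-(B / C)) ^ 2 + 2 * B * (-(B / C)) = -(B ^ 2 / C) := by
    field_simp
    ring
  rw [h1, neg_le, le_div_iff₀ hc]
  nlinarith [sq_nonneg (C * t + B)]

private lemma sum_quad {n : Type*} (s : Finset n) (f g w : n → ℝ) (t : ℝ) :
    ∑ i ∈ s, (f i * t ^ 2 + 2 * (g i) * t + w i)
      = (∑ i ∈ s, f i) * t ^ 2 + 2 * (∑ i ∈ s, g i) * t + ∑ i ∈ s, w i := by
  simp [Finset.sum_add_distrib, Finset.sum_mul, Finset.mul_sum]

/-- The per-coordinate quadratic coefficient. -/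
noncomputable def sqsC {M N : ℕ} (A : Fin M → Fin N → ℝ) (h : Fin M → ℝ)
    (lam gam : ℝ) (β : Fin M → Fin N → ℝ) (j : Fin N) : ℝ :=
  (∑ i, A i j ^ 2 * h i / β i j) + lam / gam

/-- The per-coordinate linear coefficient. -/
noncomputable def sqsB {M N : ℕ} (A : Fin M → Fin N → ℝ) (P : Fin M → ℝ)
    (μ : Fin N → ℝ) (h : Fin M → ℝ) (lam gam : ℝ) (zl : Fin N → ℝ) (j : Fin N) : ℝ :=
  (∑ i, A i j * h i * ((∑ k, A i k * zl k) - P i)) + (lam / gam) * (zl j - μ j)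

/-- the closed-form update minimizes the separable paraboloid
surrogate coordinate-wise, and the resulting iteration monotonically decreases
`L`: `L(zˡ⁺¹) ≤ L(zˡ)`. -/
theorem sqs_update_minimizes_and_decreases {M N : ℕ}
    (A : Fin M → Fin N → ℝ) (P : Fin M → ℝ) (μ : Fin N → ℝ) (h : Fin M → ℝ)
    (lam gam : ℝ) (hA : ∀ i j, 0 ≤ A i j) (hrow : ∀ i, 0 < ∑ j, A i j)
    (hh : ∀ i, h i = 0 ∨ h i = 1) (hlam : 0 < lam) (hgam : 0 < gam)
    (β : Fin M → Fin N → ℝ) (hβ : ∀ i j, β i j = A i j / ∑ k, A i k)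
    (zl : Fin N → ℝ) :
    (∀ z : Fin N → ℝ,
        surrogate A P μ h lam gam β zl (sqsUpdate A P μ h lam gam β zl)
          ≤ surrogate A P μ h lam gam β zl z) ∧
    lsObj A P μ h lam gam (sqsUpdate A P μ h lam gam β zl)
      ≤ lsObj A P μ h lam gam zl := by
  have hhnn : ∀ i, 0 ≤ h i := by
    intro i; rcases hh i with h0 | h0 <;> simp [h0]
  have hβnn : ∀ i j, 0 ≤ β i j := fun i j => by
    rw [hβ]; exact div_nonneg (hA i j) (hrow i).le
  have hβz : ∀ i j, β i j = 0 → A i j = 0 := by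
    intro i j hb
    rw [hβ] at hb
    exact (div_eq_zero_iff.mp hb).resolve_right (hrow i).ne'
  have hβsum : ∀ i, ∑ j, β i j = 1 := by
    intro i
    simp_rw [hβ]
    rw [← Finset.sum_div, div_self (hrow i).ne']
  have hCpos : ∀ j, 0 < sqsC A h lam gam β j := by
    intro j
    have : (0:ℝ) ≤ ∑ i, A i j ^ 2 * h i / β i j :=
      Finset.sum_nonneg fun i _ =>
        div_nonneg (mul_nonneg (sq_nonneg _) (hhnn i)) (hβnn i j)
    have := div_pos hlam hgam
    unfold sqsC
    linarith
  -- expansion of the surrogate as separable quadratic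
  have hsur : ∀ z, surrogate A P μ h lam gam β zl z
      = ∑ j, ((∑ i, A i j ^ 2 * h i / β i j) * (z j - zl j) ^ 2
          + 2 * (∑ i, A i j * h i * ((∑ k, A i k * zl k) - P i)) * (z j - zl j)
          + (∑ i, β i j * h i * ((∑ k, A i k * zl k) - P i) ^ 2)
          + (lam / gam) * (z j - μ j) ^ 2) := by
    intro z
    unfold surrogate
    rw [Finset.sum_comm, Finset.mul_sum, ← Finset.sum_add_distrib]
    refine Finset.sum_congr rfl fun j _ => ?_
    rw [Finset.sum_congr rfl fun i _ =>
      sq_key (A i j) (β i j) (h i) (z j - zl j) (∑ k, A i k * zl k) (P i) (hβz i j),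
      sum_quad]
  have key : ∀ z, surrogate A P μ h lam gam β zl z
      = (∑ j, (sqsC A h lam gam β j * (z j - zl j) ^ 2
            + 2 * sqsB A P μ h lam gam zl j * (z j - zl j)))
        + surrogate A P μ h lam gam β zl zl := by
    intro z
    rw [hsur z, hsur zl, ← Finset.sum_add_distrib]
    refine Finset.sum_congr rfl fun j _ => ?_
    unfold sqsC sqsB
    ring
  -- the update coordinate
  have hupd : ∀ j, sqsUpdate A P μ h lam gam β zl j - zl j
      = -(sqsB A P μ h lam gam zl j / sqsC A h lam gam β j) := by
    intro j
    unfold sqsUpdate sqsB sqsC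
    ring
  -- part 1: minimization
  have hmin : ∀ z, surrogate A P μ h lam gam β zl (sqsUpdate A P μ h lam gam β zl)
      ≤ surrogate A P μ h lam gam β zl z := by
    intro z
    rw [key z, key (sqsUpdate A P μ h lam gam β zl)]
    gcongr ?_ + _
    refine Finset.sum_le_sum fun j _ => ?_
    rw [hupd j]
    exact quad_min _ _ _ (hCpos j)
  -- surrogate majorizes the objective
  have hQL : ∀ z, lsObj A P μ h lam gam z ≤ surrogate A P μ h lam gam β zl z := by
    intro z
    unfold lsObj surrogate
    gcongr ?_ + _
    refine Finset.sum_le_sum fun i _ => ?_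
    have hx : (∑ j, A i j * z j) - P i
        = ∑ j, β i j * ((A i j / β i j) * (z j - zl j) + (∑ k, A i k * zl k) - P i) := by
      rw [Finset.sum_congr rfl fun j _ =>
        lin_key (A i j) (β i j) (z j - zl j) (∑ k, A i k * zl k) (P i) (hβz i j)]
      rw [Finset.sum_add_distrib, ← Finset.sum_mul, hβsum i, one_mul]
      simp only [mul_sub, Finset.sum_sub_distrib]
      ring
    have hcs : (∑ j, β i j * ((A i j / β i j) * (z j - zl j) + (∑ k, A i k * zl k) - P i)) ^ 2
        ≤ (∑ j, β i j) * ∑ j, β i j *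
            ((A i j / β i j) * (z j - zl j) + (∑ k, A i k * zl k) - P i) ^ 2 :=
      Finset.sum_sq_le_sum_mul_sum_of_sq_eq_mul _ (fun j _ => hβnn i j)
        (fun j _ => mul_nonneg (hβnn i j) (sq_nonneg _)) (fun j _ => by ring)
    rw [hβsum i, one_mul] at hcs
    calc h i * ((∑ j, A i j * z j) - P i) ^ 2
        ≤ h i * ∑ j, β i j *
            ((A i j / β i j) * (z j - zl j) + (∑ k, A i k * zl k) - P i) ^ 2 := by
          rw [hx]; exact mul_le_mul_of_nonneg_left hcs (hhnn i)
      _ = ∑ j, β i j * h i *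
            ((A i j / β i j) * (z j - zl j) + (∑ k, A i k * zl k) - P i) ^ 2 := by
          rw [Finset.mul_sum]
          exact Finset.sum_congr rfl fun j _ => by ring
  -- surrogate equals the objective at zl
  have hQeq : surrogate A P μ h lam gam β zl zl = lsObj A P μ h lam gam zl := by
    unfold surrogate lsObj
    congr 1
    refine Finset.sum_congr rfl fun i _ => ?_
    simp only [sub_self, mul_zero, zero_add]
    simp_rw [mul_assoc]
    rw [← Finset.sum_mul, hβsum i, one_mul]
  refine ⟨hmin, ?_⟩
  calc lsObj A P μ h lam gam (sqsUpdate A P μ h lam gam β zl)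
      ≤ surrogate A P μ h lam gam β zl (sqsUpdate A P μ h lam gam β zl) := hQL _
    _ ≤ surrogate A P μ h lam gam β zl zl := hmin zl
    _ = lsObj A P μ h lam gam zl := hQeq
end
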